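/- (Clients hand-over, graph level.) Let P1 and P2 be disjoint sets of vertices with c1 ∈ P1 and c2 ∈ P2, and let S = S(P1, P2, c1, c2) be the binary star graph. Let G' = S − (P2 \ {c2}) be obtained by deleting all vertices of P2 other than c2. Then τ_{c1}(τ_{c2}(τ_{c1}(G')) − c2) is the star graph on P1 with center c1. -/

import Mathlib

open SimpleGraph

universe u

/-- Local complementation of `G` at vertex `i`: adjacency is toggled exactly among
pairs of neighbors of `i`. -/
def localComp {V : Type u} (G : SimpleGraph V) (i : V) : SimpleGraph V where
  Adj a b := a ≠ b ∧
    ((G.Adj i a ∧ G.Adj i b) ∧ ¬ G.Adj a b ∨ ¬(G.Adj i a ∧ G.Adj i b) ∧ G.Adj a b)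
  symm := by
    refine ⟨?_⟩
    rintro a b ⟨hne, h⟩
    refine ⟨hne.symm, ?_⟩
    rcases h with ⟨⟨ha, hb⟩, hab⟩ | ⟨h1, h2⟩
    · exact Or.inl ⟨⟨hb, ha⟩, fun h => hab h.symm⟩
    · exact Or.inr ⟨fun h => h1 ⟨h.2, h.1⟩, h2.symm⟩
  loopless := ⟨fun a h => h.1 rfl⟩

/-- Vertex deletion `G − i`: remove every edge incident to `i` (the vertex stays,
isolated). -/
def delVert {V : Type u} (G : SimpleGraph V) (i : V) : SimpleGraph V where
  Adj a b := G.Adj a b ∧ a ≠ i ∧ b ≠ i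
  symm := ⟨fun _ _ ⟨h, ha, hb⟩ => ⟨h.symm, hb, ha⟩⟩
  loopless := ⟨fun a h => G.irrefl h.1⟩

/-- Deletion of a set `Z` of vertices: remove every edge incident to a vertex of `Z`. -/
def delSet {V : Type u} (G : SimpleGraph V) (Z : Set V) : SimpleGraph V where
  Adj a b := G.Adj a b ∧ a ∉ Z ∧ b ∉ Z
  symm := ⟨fun _ _ ⟨h, ha, hb⟩ => ⟨h.symm, hb, ha⟩⟩
  loopless := ⟨fun a h => G.irrefl h.1⟩

/-- Star graph on the set `W` with center `c`: edges are exactly the pairs `{c, u}`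
for `u ∈ W \ {c}`. -/
def starGraph {V : Type u} (W : Set V) (c : V) : SimpleGraph V :=
  SimpleGraph.fromRel (fun a b => a = c ∧ b ∈ W \ {c})

/-- Complete graph on the set `A`: edges are exactly all pairs of distinct elements
of `A`. -/
def completeOn {V : Type u} (A : Set V) : SimpleGraph V :=
  SimpleGraph.fromRel (fun a b => a ∈ A ∧ b ∈ A)

/-- Complete bipartite graph on parts `A` and `B`: edges are exactly the pairs
`{a, b}` with `a ∈ A` and `b ∈ B`. -/
def completeBipartiteOn {V : Type u} (A B : Set V) : SimpleGraph V :=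
  SimpleGraph.fromRel (fun a b => a ∈ A ∧ b ∈ B)

/-- Binary star graph `S(P1, P2, c1, c2)`: edges are exactly the pairs `{c1, u}`
with `u ∈ P2` together with the pairs `{u, c2}` with `u ∈ P1`. -/
def binaryStar {V : Type u} (P1 P2 : Set V) (c1 c2 : V) : SimpleGraph V :=
  SimpleGraph.fromRel (fun a b => (a = c1 ∧ b ∈ P2) ∨ (a ∈ P1 ∧ b = c2))

/-- The graph with the single edge `{c1, c2}`. -/
def singleEdge {V : Type u} (c1 c2 : V) : SimpleGraph V :=
  SimpleGraph.fromRel (fun a b => a = c1 ∧ b = c2)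

/-!
`S − (P2 \ {c2})` is the star on `P1 ∪ {c2}` centred at `c2`, in which `c1` is a leaf, so
`τ_{c1}` does nothing to it. Local complementation at the centre of a star turns it into the
complete graph on its vertex set; deleting `c2` leaves the complete graph on `P1`, and local
complementation of a complete graph at one of its vertices removes exactly the edges not
through that vertex, which leaves the star on `P1` centred at `c1`.
-/

@[simp] lemma localComp_adj {V : Type u} (G : SimpleGraph V) (i a b : V) :
    (localComp G i).Adj a b ↔ a ≠ b ∧
      ((G.Adj i a ∧ G.Adj i b) ∧ ¬ G.Adj a b ∨ ¬(G.Adj i a ∧ G.Adj i b) ∧ G.Adj a b) :=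
  Iff.rfl

@[simp] lemma delVert_adj {V : Type u} (G : SimpleGraph V) (i a b : V) :
    (delVert G i).Adj a b ↔ G.Adj a b ∧ a ≠ i ∧ b ≠ i :=
  Iff.rfl

@[simp] lemma delSet_adj {V : Type u} (G : SimpleGraph V) (Z : Set V) (a b : V) :
    (delSet G Z).Adj a b ↔ G.Adj a b ∧ a ∉ Z ∧ b ∉ Z :=
  Iff.rfl

@[simp] lemma starGraph_adj {V : Type u} (W : Set V) (c a b : V) :
    (starGraph W c).Adj a b ↔ a ≠ b ∧ (a = c ∧ b ∈ W \ {c} ∨ b = c ∧ a ∈ W \ {c}) :=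
  fromRel_adj _ _ _

@[simp] lemma completeOn_adj {V : Type u} (A : Set V) (a b : V) :
    (completeOn A).Adj a b ↔ a ≠ b ∧ a ∈ A ∧ b ∈ A := by
  simp [completeOn, and_comm]

@[simp] lemma binaryStar_adj {V : Type u} (P1 P2 : Set V) (c1 c2 a b : V) :
    (binaryStar P1 P2 c1 c2).Adj a b ↔ a ≠ b ∧
      ((a = c1 ∧ b ∈ P2 ∨ a ∈ P1 ∧ b = c2) ∨ (b = c1 ∧ a ∈ P2 ∨ b ∈ P1 ∧ a = c2)) :=
  fromRel_adj _ _ _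

lemma localComp_eq_self_of_subsingleton {V : Type u} {G : SimpleGraph V} {i : V}
    (h : (G.neighborSet i).Subsingleton) : localComp G i = G := by
  ext a b
  constructor
  · rintro ⟨hne, ⟨⟨ha, hb⟩, -⟩ | ⟨-, hab⟩⟩
    · exact absurd (h ha hb) hne
    · exact hab
  · intro hab
    exact ⟨hab.ne, Or.inr ⟨fun ⟨ha, hb⟩ => hab.ne (h ha hb), hab⟩⟩

lemma localComp_starGraph_of_ne_center {V : Type u} (W : Set V) {c i : V} (h : i ≠ c) :
    localComp (starGraph W c) i = starGraph W c := by
  refine localComp_eq_self_of_subsingleton fun a ha b hb => ?_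
  simp only [mem_neighborSet, _root_.starGraph_adj] at ha hb
  grind

lemma localComp_starGraph_center {V : Type u} {W : Set V} {c : V} (hc : c ∈ W) :
    localComp (starGraph W c) c = completeOn W := by
  ext a b
  simp only [localComp_adj, _root_.starGraph_adj, completeOn_adj, Set.mem_sdiff,
    Set.mem_singleton_iff]
  grind

lemma localComp_completeOn {V : Type u} {W : Set V} {c : V} (hc : c ∈ W) :
    localComp (completeOn W) c = starGraph W c := by
  ext a b
  simp only [localComp_adj, _root_.starGraph_adj, completeOn_adj, Set.mem_sdiff,
    Set.mem_singleton_iff]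
  grind

lemma delVert_completeOn {V : Type u} (W : Set V) (c : V) :
    delVert (completeOn W) c = completeOn (W \ {c}) := by
  ext a b
  simp only [delVert_adj, completeOn_adj, Set.mem_sdiff, Set.mem_singleton_iff]
  tauto

lemma delSet_binaryStar {V : Type u} {P1 P2 : Set V} (hdisj : Disjoint P1 P2) {c1 c2 : V}
    (hc1 : c1 ∈ P1) :
    delSet (binaryStar P1 P2 c1 c2) (P2 \ {c2}) = starGraph (insert c2 P1) c2 := by
  ext a b
  simp only [delSet_adj, binaryStar_adj, _root_.starGraph_adj, Set.mem_sdiff,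
    Set.mem_singleton_iff, Set.mem_insert_iff]
  grind

/-- Clients hand-over, graph level:
with `G' = S − (P2 \ {c2})`, `τ_{c1}(τ_{c2}(τ_{c1}(G')) − c2)` is the star graph on
`P1` with center `c1`. -/
theorem stmt_8 {V : Type u} (P1 P2 : Set V) (hdisj : Disjoint P1 P2)
    (c1 c2 : V) (hc1 : c1 ∈ P1) (hc2 : c2 ∈ P2) :
    localComp (delVert (localComp (localComp
        (delSet (binaryStar P1 P2 c1 c2) (P2 \ {c2})) c1) c2) c2) c1 =
      starGraph P1 c1 := by
  have hc2P1 : c2 ∉ P1 := fun h => Set.disjoint_left.mp hdisj h hc2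
  have hc12 : c1 ≠ c2 := by rintro rfl; exact hc2P1 hc1
  rw [delSet_binaryStar hdisj hc1, localComp_starGraph_of_ne_center _ hc12,
    localComp_starGraph_center (Set.mem_insert c2 P1), delVert_completeOn,
    Set.insert_sdiff_self_of_notMem hc2P1, localComp_completeOn hc1]
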